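/- For the strategy φ(x) ≡ 2 in Example 5.1 with v*(0) = 0 and v*(x) = -2 - 2^x for x ≥ 1: the Dubins–Savage martingale condition fails, since E_1^φ[v*(X_n)] = (1/2)^n(-2 - 2^{n+1}) = -(1/2)^{n-1} - 2 → -2 ≠ 0 as n → ∞. -/

import Mathlib

open Filter Topology

/-- Transition kernel of the MDP of Example 5.1 under the stationary strategy `φ(x) ≡ 2`:
`0` is absorbing; from `x ≥ 1` the chain moves to `0` w.p. `1/2` and to `x+1` w.p. `1/2`. -/
noncomputable def qphi2 (x y : ℕ) : ℝ :=
  if x = 0 then (if y = 0 then 1 else 0)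
  else if y = 0 then (1/2 : ℝ)
  else if y = x + 1 then (1/2 : ℝ)
  else 0

/-- `probn q t x y`: probability that the chain with kernel `q` started at `x`
is at `y` at time `t`. -/
noncomputable def probn (q : ℕ → ℕ → ℝ) : ℕ → ℕ → ℕ → ℝ
  | 0, x, y => if y = x then 1 else 0
  | (t+1), x, y => ∑' z : ℕ, probn q t x z * q z y

/-- The optimal value function: `v*(0) = 0`, `v*(x) = -2 - 2^x` for `x ≥ 1`. -/
noncomputable def vstar (x : ℕ) : ℝ := if x = 0 then 0 else -2 - 2^x

/-! Started at `1`, the chain has either climbed to `n + 1` (probability `2⁻ⁿ`) or been absorbed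
at `0` by time `n`. Since `v*(0) = 0`, only the first event contributes to `E₁[v*(Xₙ)]`, which is
therefore `2⁻ⁿ (-2 - 2ⁿ⁺¹) = -2 · 2⁻ⁿ - 2 → -2`. -/

lemma probn_succ_eq_sum_of_support_subset {q : ℕ → ℕ → ℝ} {t x : ℕ} {s : Finset ℕ}
    (hs : ∀ z ∉ s, probn q t x z = 0) (y : ℕ) :
    probn q (t + 1) x y = ∑ z ∈ s, probn q t x z * q z y :=
  tsum_eq_sum fun z hz => by rw [hs z hz, zero_mul]

lemma probn_qphi2_one (n y : ℕ) :
    probn qphi2 n 1 y =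
      if y = n + 1 then (1/2 : ℝ)^n else if y = 0 then 1 - (1/2 : ℝ)^n else 0 := by
  induction n generalizing y with
  | zero => simp [probn]
  | succ n ih =>
    have hsupp : ∀ z ∉ ({0, n + 1} : Finset ℕ), probn qphi2 n 1 z = 0 := by
      intro z hz
      simp only [Finset.mem_insert, Finset.mem_singleton, not_or] at hz
      simp [ih, hz.1, hz.2]
    have h0 : (0 : ℕ) ≠ n + 1 := (Nat.succ_ne_zero n).symm
    rw [probn_succ_eq_sum_of_support_subset hsupp, Finset.sum_pair h0, ih 0, ih (n + 1)]
    by_cases hy0 : y = 0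
    · subst hy0
      simp [qphi2]
      ring
    · by_cases hy : y = n + 2
      · subst hy
        simp [qphi2]
        ring
      · simp [qphi2, hy0, hy]

lemma tsum_probn_qphi2_one_mul_vstar (n : ℕ) :
    ∑' y : ℕ, probn qphi2 n 1 y * vstar y = (1/2 : ℝ)^n * (-2 - 2^(n+1)) := by
  rw [tsum_eq_single (n + 1) fun y hy => ?_]
  · simp [probn_qphi2_one, vstar]
  · rcases Nat.eq_zero_or_pos y with rfl | hy0
    · simp [vstar]
    · simp [probn_qphi2_one, hy, hy0.ne']

lemma half_pow_mul_neg_two_sub_two_pow_succ (n : ℕ) :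
    (1/2 : ℝ)^n * (-2 - 2^(n+1)) = -2 * (1/2 : ℝ)^n - 2 := by
  have h : (1/2 : ℝ)^n * 2^n = 1 := by rw [← mul_pow]; norm_num
  linear_combination (-2 : ℝ) * h

/-- For `φ(x) ≡ 2` in Example 5.1, the Dubins–Savage martingale condition fails:
`E_1^φ[v*(X_n)] = (1/2)^n (-2 - 2^{n+1}) = -(1/2)^{n-1} - 2 → -2 ≠ 0` as `n → ∞`. -/
theorem dubins_savage_second_condition_fails :
    (∀ n : ℕ, (∑' y : ℕ, probn qphi2 n 1 y * vstar y)
        = (1/2 : ℝ)^n * (-2 - 2^(n+1)))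
      ∧ (∀ n : ℕ, 1 ≤ n →
          (1/2 : ℝ)^n * (-2 - 2^(n+1)) = -(1/2 : ℝ)^(n-1) - 2)
      ∧ Tendsto (fun n : ℕ => ∑' y : ℕ, probn qphi2 n 1 y * vstar y) atTop (𝓝 (-2))
      ∧ (-2 : ℝ) ≠ 0 := by
  refine ⟨tsum_probn_qphi2_one_mul_vstar, fun n hn => ?_, ?_, by norm_num⟩
  · obtain ⟨m, rfl⟩ := Nat.exists_eq_add_of_le' hn
    rw [half_pow_mul_neg_two_sub_two_pow_succ, Nat.add_sub_cancel, pow_succ]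
    ring
  · simp_rw [tsum_probn_qphi2_one_mul_vstar, half_pow_mul_neg_two_sub_two_pow_succ]
    have h := ((tendsto_pow_atTop_nhds_zero_of_lt_one (by norm_num : (0 : ℝ) ≤ 1/2)
      (by norm_num)).const_mul (-2)).sub_const 2
    simpa using h
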